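/- arXiv:1908.03733 — 4 statements merged into one kernel-verified Lean document; each statement's English description precedes it below -/
import Mathlib

section
/- Let G be a graph on n vertices (n ≥ 2) such that for every vertex x and every radius r ≤ 10·(log n)², the ball B_r(x) of radius r around x has at most n/(5 log n) vertices. Then there exists a set S ⊆ V(G) with |S| ≤ n/(5 log n) such that every connected component of G − S has at most n/(5 log n) vertices. -/
/-!
Grow balls `B r` around a vertex `z` inside the current vertex set `A`. Since `|B 0| = 1` and
`|B R| ≤ K < (1 + c) ^ R`, some `r < R` has `|B (r + 1)| ≤ (1 + c) |B r|`. Deleting the sphere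
`B (r + 1) \ B r` costs at most `c |B r|` vertices and cuts off `B r`, a piece of at most `K`
vertices; recursing on `A \ B (r + 1)` and charging `c` to each vertex of `B (r + 1)` gives a
separator of size at most `c |A|`. For `c = 1 / (5 log n)`, `R = ⌊10 log² n⌋`, `K = n / (5 log n)`,
the condition `K < (1 + c) ^ R` follows from `log (1 + c) ≥ c / 2`.
-/

open Real

lemma exists_lt_and_succ_le_mul_of_lt_pow {f : ℕ → ℝ} {c K : ℝ} {R : ℕ} (hc : 0 ≤ c)
    (h0 : 1 ≤ f 0) (hR : f R ≤ K) (hK : K < (1 + c) ^ R) :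
    ∃ r < R, f (r + 1) ≤ (1 + c) * f r := by
  by_contra! hgrow
  have : ∀ k ≤ R, (1 + c) ^ k ≤ f k := by
    intro k
    induction k with
    | zero => simpa using h0
    | succ k ih =>
      intro hk
      calc (1 + c) ^ (k + 1) = (1 + c) * (1 + c) ^ k := pow_succ' _ _
        _ ≤ (1 + c) * f k := by gcongr; exact ih (by omega)
        _ ≤ f (k + 1) := (hgrow k (by omega)).le
  linarith [this R le_rfl]

namespace SimpleGraph

variable {V : Type*} (G : SimpleGraph V)

/-- The ball of radius `r` around `x` in the induced subgraph `G[A]` (empty if `x ∉ A`). -/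
def ballIn (A : Set V) (x : V) (r : ℕ) : Set V :=
  {v | ∃ w : G.Walk x v, w.length ≤ r ∧ ∀ y ∈ w.support, y ∈ A}

/-- The vertex set of the component of `v` in `G[A]` (empty if `v ∉ A`). -/
def reachIn (A : Set V) (v : V) : Set V :=
  {u | ∃ w : G.Walk v u, ∀ y ∈ w.support, y ∈ A}

variable {G} {A : Set V} {x : V} {r : ℕ}

lemma ballIn_subset (A : Set V) (x : V) (r : ℕ) : G.ballIn A x r ⊆ A :=
  fun _ ⟨w, _, hw⟩ => hw _ w.end_mem_support

lemma ballIn_subset_ball (A : Set V) (x : V) (r : ℕ) :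
    G.ballIn A x r ⊆ {v | ∃ w : G.Walk x v, w.length ≤ r} :=
  fun _ ⟨w, hl, _⟩ => ⟨w, hl⟩

lemma self_mem_ballIn (hx : x ∈ A) (r : ℕ) : x ∈ G.ballIn A x r :=
  ⟨.nil, by simp, by simpa using hx⟩

lemma ballIn_mono {r r' : ℕ} (h : r ≤ r') : G.ballIn A x r ⊆ G.ballIn A x r' :=
  fun _ ⟨w, hl, hw⟩ => ⟨w, hl.trans h, hw⟩

lemma mem_ballIn_succ_of_adj {a b : V} (ha : a ∈ G.ballIn A x r) (hab : G.Adj a b)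
    (hb : b ∈ A) : b ∈ G.ballIn A x (r + 1) := by
  obtain ⟨w, hl, hw⟩ := ha
  refine ⟨w.concat hab, by simpa [Walk.length_concat], fun y hy => ?_⟩
  rw [Walk.support_concat, List.mem_append, List.mem_singleton] at hy
  exact hy.elim (hw y) fun h => h ▸ hb

lemma mem_ballIn_iff_of_adj {T : Set V} (hTA : T ⊆ A)
    (hT : Disjoint T (G.ballIn A x (r + 1) \ G.ballIn A x r)) {a b : V} (hab : G.Adj a b)
    (ha : a ∈ T) (hb : b ∈ T) : a ∈ G.ballIn A x r ↔ b ∈ G.ballIn A x r := by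
  have key : ∀ {a b}, G.Adj a b → b ∈ T → a ∈ G.ballIn A x r → b ∈ G.ballIn A x r :=
    fun hab hb ha => by_contra fun h =>
      hT.ne_of_mem hb ⟨mem_ballIn_succ_of_adj ha hab (hTA hb), h⟩ rfl
  exact ⟨key hab hb, key hab.symm ha⟩

lemma Walk.forall_mem_support_iff {P : V → Prop} {T : Set V}
    (hP : ∀ a b, G.Adj a b → a ∈ T → b ∈ T → (P a ↔ P b)) {v u : V} (w : G.Walk v u)
    (hw : ∀ y ∈ w.support, y ∈ T) : ∀ y ∈ w.support, P y ↔ P v := by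
  induction w with
  | nil => simp
  | @cons a b c hab p ih =>
    simp only [Walk.support_cons, List.mem_cons, forall_eq_or_imp] at hw ⊢
    refine ⟨trivial, fun y hy => (ih hw.2 y hy).trans (hP a b hab hw.1 ?_).symm⟩
    exact hw.2 b p.start_mem_support

lemma reachIn_mono {T T' : Set V} (h : T ⊆ T') (v : V) : G.reachIn T v ⊆ G.reachIn T' v :=
  fun _ ⟨w, hw⟩ => ⟨w, fun y hy => h (hw y hy)⟩

lemma reachIn_subset_ballIn {T : Set V} (hTA : T ⊆ A)
    (hT : Disjoint T (G.ballIn A x (r + 1) \ G.ballIn A x r)) {v : V}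
    (hv : v ∈ G.ballIn A x r) : G.reachIn T v ⊆ G.ballIn A x r := fun u ⟨w, hw⟩ =>
  (Walk.forall_mem_support_iff (fun _ _ => mem_ballIn_iff_of_adj hTA hT) w hw u
    w.end_mem_support).2 hv

lemma reachIn_subset_reachIn_diff_ballIn {T : Set V} (hTA : T ⊆ A)
    (hT : Disjoint T (G.ballIn A x (r + 1) \ G.ballIn A x r)) {v : V}
    (hv : v ∉ G.ballIn A x r) : G.reachIn T v ⊆ G.reachIn (T \ G.ballIn A x (r + 1)) v :=
  fun _ ⟨w, hw⟩ => ⟨w, fun y hy => ⟨hw y hy, fun hy' =>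
    hv <| (Walk.forall_mem_support_iff (fun _ _ => mem_ballIn_iff_of_adj hTA hT) w hw y hy).1 <|
      by_contra fun h => hT.ne_of_mem (hw y hy) ⟨hy', h⟩ rfl⟩⟩

theorem exists_separator_of_ncard_ball_le [Finite V] {c K : ℝ} {R : ℕ} (hc : 0 ≤ c)
    (hK : K < (1 + c) ^ R)
    (hball : ∀ x, ∀ r ≤ R, ({v | ∃ w : G.Walk x v, w.length ≤ r}.ncard : ℝ) ≤ K)
    (A : Set V) :
    ∃ S ⊆ A, (S.ncard : ℝ) ≤ c * A.ncard ∧ ∀ v ∈ A \ S, ((G.reachIn (A \ S) v).ncard : ℝ) ≤ K := by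
  induction A using WellFoundedLT.induction with
  | _ A ih =>
  obtain rfl | ⟨z, hz⟩ := A.eq_empty_or_nonempty
  · exact ⟨∅, by simp, by simp, by simp⟩
  set B : ℕ → Set V := G.ballIn A z
  have hBK : ∀ r ≤ R, ((B r).ncard : ℝ) ≤ K := fun r hr =>
    le_trans (by exact_mod_cast Set.ncard_le_ncard (ballIn_subset_ball A z r)) (hball z r hr)
  obtain ⟨r, hrR, hr⟩ := exists_lt_and_succ_le_mul_of_lt_pow (f := fun r => ((B r).ncard : ℝ)) hc
    (by exact_mod_cast (Set.ncard_pos).2 ⟨z, self_mem_ballIn hz 0⟩) (hBK R le_rfl) hK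
  have hBB : B r ⊆ B (r + 1) := ballIn_mono r.le_succ
  have hBA : B (r + 1) ⊆ A := ballIn_subset A z (r + 1)
  obtain ⟨S', hS'A', hS'card, hS'reach⟩ :=
    ih (A \ B (r + 1)) (Set.sdiff_ssubset_left_iff.2 ⟨z, hz, self_mem_ballIn hz _⟩)
  refine ⟨(B (r + 1) \ B r) ∪ S', Set.union_subset (Set.sdiff_subset.trans hBA)
    (hS'A'.trans Set.sdiff_subset), ?_, fun v hv => ?_⟩
  · have hsph : ((B (r + 1) \ B r).ncard : ℝ) + (B r).ncard = (B (r + 1)).ncard := by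
      exact_mod_cast Set.ncard_sdiff_add_ncard_of_subset hBB
    have hA' : ((A \ B (r + 1)).ncard : ℝ) + (B (r + 1)).ncard = A.ncard := by
      exact_mod_cast Set.ncard_sdiff_add_ncard_of_subset hBA
    have hunion : (((B (r + 1) \ B r) ∪ S').ncard : ℝ) ≤ (B (r + 1) \ B r).ncard + S'.ncard := by
      exact_mod_cast Set.ncard_union_le _ _
    have hgrow : c * (B r).ncard ≤ c * (B (r + 1)).ncard :=
      mul_le_mul_of_nonneg_left (by exact_mod_cast Set.ncard_le_ncard hBB) hc
    nlinarith
  · have hdisj : Disjoint (A \ ((B (r + 1) \ B r) ∪ S')) (B (r + 1) \ B r) :=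
      Set.disjoint_sdiff_left.mono_right Set.subset_union_left
    by_cases hvr : v ∈ B r
    · have hsub := reachIn_subset_ballIn Set.sdiff_subset hdisj hvr
      exact le_trans (by exact_mod_cast Set.ncard_le_ncard hsub) (hBK r hrR.le)
    · refine le_trans ?_ (hS'reach v ⟨⟨hv.1, fun h => hv.2 (.inl ⟨h, hvr⟩)⟩, fun h => hv.2 (.inr h)⟩)
      have hsub : (A \ ((B (r + 1) \ B r) ∪ S')) \ B (r + 1) ⊆ (A \ B (r + 1)) \ S' :=
        fun y hy => ⟨⟨hy.1.1, hy.2⟩, fun h => hy.1.2 (.inr h)⟩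
      exact_mod_cast Set.ncard_le_ncard ((reachIn_subset_reachIn_diff_ballIn Set.sdiff_subset
        hdisj hvr).trans (reachIn_mono hsub v))

end SimpleGraph

lemma half_le_log_one_add {x : ℝ} (h0 : 0 ≤ x) (h1 : x ≤ 1) : x / 2 ≤ log (1 + x) := by
  have h := one_sub_inv_le_log_of_pos (by linarith : 0 < 1 + x)
  have : x / 2 ≤ 1 - (1 + x)⁻¹ := by
    rw [le_sub_comm, inv_le_comm₀ (by linarith) (by linarith), inv_le_iff_one_le_mul₀ (by linarith)]
    nlinarith
  linarith

lemma div_lt_one_add_inv_pow_floor {n : ℝ} (hn : 2 ≤ n) :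
    n / (5 * log n) < (1 + 1 / (5 * log n)) ^ ⌊10 * log n ^ 2⌋₊ := by
  set L := log n with hL
  set R := ⌊10 * L ^ 2⌋₊
  have hL0 : 0.69 < L := by
    linarith [log_le_log (by norm_num) hn, log_two_gt_d9]
  have hRlb : 10 * L ^ 2 - 1 < R := by linarith [Nat.lt_floor_add_one (10 * L ^ 2)]
  have hexp : exp (1 / (10 * L)) ≤ 5 * L := by
    have : exp (1 / (10 * L)) ≤ exp 1 :=
      exp_le_exp.2 ((div_le_one (by positivity)).2 (by linarith))
    linarith [exp_one_lt_d9]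
  have hexponent : L - 1 / (10 * L) < R * (1 / (5 * L) / 2) := by
    have : L - 1 / (10 * L) = (10 * L ^ 2 - 1) * (1 / (5 * L) / 2) := by
      field_simp; ring
    rw [this]; gcongr
  calc n / (5 * L) ≤ n / exp (1 / (10 * L)) := by gcongr
    _ = exp (L - 1 / (10 * L)) := by rw [exp_sub, hL, exp_log (by linarith)]
    _ < exp (R * (1 / (5 * L) / 2)) := exp_lt_exp.2 hexponent
    _ ≤ exp (R * log (1 + 1 / (5 * L))) := by
      gcongr
      exact half_le_log_one_add (by positivity) ((div_le_one (by positivity)).2 (by linarith))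
    _ = (1 + 1 / (5 * L)) ^ R := by
      rw [← log_pow, exp_log (by positivity)]

/-- If every ball of radius at most `10 (log n)²` in an `n`-vertex graph has at
most `n/(5 log n)` vertices, then some set `S` of at most `n/(5 log n)` vertices
can be removed so that every connected component of the remainder has at most
`n/(5 log n)` vertices. -/
theorem stmt_10 {V : Type*} [Fintype V] (G : SimpleGraph V)
    (n : ℕ) (hn : n = Fintype.card V) (hn2 : 2 ≤ n)
    (hball : ∀ (x : V) (r : ℕ), (r : ℝ) ≤ 10 * (Real.log n) ^ 2 →
      (({v : V | ∃ w : G.Walk x v, w.length ≤ r}.ncard : ℝ)) ≤ n / (5 * Real.log n)) :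
    ∃ S : Set V, ((S.ncard : ℝ)) ≤ n / (5 * Real.log n) ∧
      ∀ v : V, v ∉ S →
        (({u : V | ∃ w : G.Walk v u, ∀ x ∈ w.support, x ∉ S}.ncard : ℝ))
          ≤ n / (5 * Real.log n) := by
  have hcard : (Set.univ : Set V).ncard = n := by
    rw [Set.ncard_univ, Nat.card_eq_fintype_card, hn]
  obtain ⟨S, -, hScard, hSreach⟩ := G.exists_separator_of_ncard_ball_le
    (by positivity) (div_lt_one_add_inv_pow_floor (by exact_mod_cast hn2))
    (fun x r hr => hball x r ((Nat.cast_le.2 hr).trans (Nat.floor_le (by positivity))))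
    Set.univ
  refine ⟨S, by rwa [hcard, one_div_mul_eq_div] at hScard, fun v hv => ?_⟩
  have h := hSreach v ⟨trivial, hv⟩
  rwa [← Set.compl_eq_univ_sdiff] at h
end

section
/- Every tournament on at least 2^{k−1} vertices contains a transitive subtournament on k vertices. -/
/-!
Fix a vertex `v`. Every other vertex is an out- or an in-neighbour of `v`, so one of these two
classes holds at least half of the remaining `2^k - 1` vertices, i.e. at least `2^(k-1)` of them.
A transitive chain of length `k` inside that class, with `v` put in front (out-neighbours) or at the
back (in-neighbours), is a transitive chain of length `k + 1`.
-/

open Finset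

lemma two_pow_le_card_filter_or_filter_not {α : Type*} (s : Finset α) (p : α → Prop)
    [DecidablePred p] {k : ℕ} (h : 2 ^ (k + 1) ≤ #s + 1) :
    2 ^ k ≤ #(s.filter p) ∨ 2 ^ k ≤ #(s.filter fun a ↦ ¬ p a) := by
  have := card_filter_add_card_filter_not (s := s) p
  rw [pow_succ] at h
  omega

theorem exists_chain_of_two_pow_le_card {V : Type*} [DecidableEq V] {r : V → V → Prop}
    [DecidableRel r] (htotal : ∀ u v, u ≠ v → r u v ∨ r v u) (k : ℕ) (s : Finset V)
    (hs : 2 ^ k ≤ #s) :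
    ∃ l : List V, l.length = k + 1 ∧ (∀ x ∈ l, x ∈ s) ∧ l.Pairwise fun a b ↦ a ≠ b ∧ r a b := by
  induction k generalizing s with
  | zero =>
    obtain ⟨v, hv⟩ : s.Nonempty := card_pos.1 (by simpa using hs)
    exact ⟨[v], rfl, by simpa using hv, List.pairwise_singleton _ _⟩
  | succ k ih =>
    obtain ⟨v, hv⟩ : s.Nonempty := card_pos.1 (lt_of_lt_of_le (Nat.two_pow_pos _) hs)
    have hrest : 2 ^ (k + 1) ≤ #(s.erase v) + 1 := by rwa [card_erase_add_one hv]
    rcases two_pow_le_card_filter_or_filter_not (s.erase v) (r v) hrest with hout | hin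
    · obtain ⟨l, hlen, hls, hl⟩ := ih _ hout
      have hvl : ∀ x ∈ l, v ≠ x ∧ r v x := fun x hx ↦ by
        have := hls x hx
        simp only [mem_filter, mem_erase] at this
        exact ⟨this.1.1.symm, this.2⟩
      refine ⟨v :: l, by simp [hlen], ?_, List.pairwise_cons.2 ⟨hvl, hl⟩⟩
      simp only [List.mem_cons, forall_eq_or_imp]
      exact ⟨hv, fun x hx ↦ (mem_erase.1 (mem_filter.1 (hls x hx)).1).2⟩
    · obtain ⟨l, hlen, hls, hl⟩ := ih _ hin
      have hlv : ∀ x ∈ l, x ≠ v ∧ r x v := fun x hx ↦ by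
        have := hls x hx
        simp only [mem_filter, mem_erase] at this
        exact ⟨this.1.1, (htotal x v this.1.1).resolve_right this.2⟩
      refine ⟨l ++ [v], by simp [hlen], ?_, ?_⟩
      · simp only [List.mem_append, List.mem_singleton]
        rintro x (hx | rfl)
        exacts [(mem_erase.1 (mem_filter.1 (hls x hx)).1).2, hv]
      · simpa [List.pairwise_append] using ⟨hl, hlv⟩

theorem stmt_14_general {V : Type*} [Fintype V] [DecidableEq V]
    (r : V → V → Prop) [DecidableRel r]
    (htour : ∀ u v : V, u ≠ v → (r u v ↔ ¬ r v u))
    (k : ℕ) (hn : 2 ^ (k - 1) ≤ Fintype.card V) :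
    ∃ f : Fin k → V, Function.Injective f ∧ ∀ i j : Fin k, i < j → r (f i) (f j) := by
  cases k with
  | zero => exact ⟨Fin.elim0, fun i ↦ i.elim0, fun i ↦ i.elim0⟩
  | succ k =>
    have htotal : ∀ u v, u ≠ v → r u v ∨ r v u := fun u v huv ↦ by
      have := htour u v huv
      tauto
    obtain ⟨l, hlen, -, hl⟩ := exists_chain_of_two_pow_le_card htotal k univ (by simpa using hn)
    rw [← hlen]
    exact ⟨l.get, List.nodup_iff_injective_get.1 (hl.imp And.left),
      List.pairwise_iff_get.1 (hl.imp And.right)⟩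

/-- Every tournament on at least `2^(k-1)` vertices contains a transitive
subtournament on `k` vertices. -/
theorem stmt_14 {V : Type*} [Fintype V] [DecidableEq V]
    (r : V → V → Prop) [DecidableRel r]
    (hirr : ∀ v, ¬ r v v)
    (htour : ∀ u v : V, u ≠ v → (r u v ↔ ¬ r v u))
    (k : ℕ) (hn : 2 ^ (k - 1) ≤ Fintype.card V) :
    ∃ f : Fin k → V, Function.Injective f ∧ ∀ i j : Fin k, i < j → r (f i) (f j) :=
  stmt_14_general r htour k hn
end

section
/- Let T be a tournament, and suppose U ⊆ V(T) is a set of minimum size such that T − U is disconnected into a source part S and a nonempty sink part T' (every edge between S and T' goes from S to T'), subject to the conditions |S| ≥ |U| and |T'| ≥ k. Then for every nonempty subset X ⊆ U, we have |N⁺(X) ∩ S| ≥ |X|/2. -/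
/-!
If `X ⊆ U` had fewer than `|X|/2` out-neighbours `Y` in the source `S`, move `X` into the sink
and `Y` into the cut. Every vertex of `S \ Y` beats all of `X` (it is not beaten by any of
them, and `r` is a tournament), so `(U \ X) ∪ Y` still separates `S \ Y` from `T' ∪ X`; it is
smaller than `U` while the size conditions survive, contradicting minimality.
-/

open Finset

section Separation

variable {V : Type*} [Fintype V] [DecidableEq V]

def outNbhd (r : V → V → Prop) [DecidableRel r] (X : Finset V) : Finset V :=
  univ.filter fun v => ∃ x ∈ X, r x v

structure IsSeparation (r : V → V → Prop) (U S T : Finset V) : Prop where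
  cover : U ∪ S ∪ T = univ
  disjoint_cut_source : Disjoint U S
  disjoint_cut_sink : Disjoint U T
  disjoint_source_sink : Disjoint S T
  forward : ∀ s ∈ S, ∀ t ∈ T, r s t

namespace IsSeparation

variable {r : V → V → Prop} [DecidableRel r] {U S T X : Finset V}

theorem move_to_sink (h : IsSeparation r U S T)
    (htour : ∀ u v : V, u ≠ v → (r u v ↔ ¬ r v u)) (hXU : X ⊆ U) :
    IsSeparation r ((U \ X) ∪ (outNbhd r X ∩ S)) (S \ (outNbhd r X ∩ S)) (T ∪ X) where
  cover := by
    rw [← h.cover]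
    ext v
    simp only [mem_union, mem_sdiff, mem_inter]
    have := @hXU v
    tauto
  disjoint_cut_source := disjoint_union_left.2
    ⟨(h.disjoint_cut_source.mono_left sdiff_subset).mono_right sdiff_subset, disjoint_sdiff⟩
  disjoint_cut_sink := disjoint_union_left.2
    ⟨disjoint_union_right.2 ⟨h.disjoint_cut_sink.mono_left sdiff_subset, sdiff_disjoint⟩,
      disjoint_union_right.2 ⟨h.disjoint_source_sink.mono_left inter_subset_right,
        (h.disjoint_cut_source.symm.mono_right hXU).mono_left inter_subset_right⟩⟩
  disjoint_source_sink := disjoint_union_right.2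
    ⟨h.disjoint_source_sink.mono_left sdiff_subset,
      (h.disjoint_cut_source.symm.mono_right hXU).mono_left sdiff_subset⟩
  forward := by
    intro s hs t ht
    obtain ⟨hsS, hsY⟩ := mem_sdiff.1 hs
    rcases mem_union.1 ht with htT | htX
    · exact h.forward s hsS t htT
    · have hst : s ≠ t := fun hst =>
        disjoint_left.1 h.disjoint_cut_source (hXU htX) (hst ▸ hsS)
      refine (htour s t hst).2 fun hts => hsY ?_
      exact mem_inter.2 ⟨mem_filter.2 ⟨mem_univ s, t, htX, hts⟩, hsS⟩

end IsSeparation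

end Separation

theorem stmt_15_general {V : Type*} [Fintype V] [DecidableEq V]
    (r : V → V → Prop) [DecidableRel r]
    (htour : ∀ u v : V, u ≠ v → (r u v ↔ ¬ r v u))
    (k : ℕ) (U S T' : Finset V)
    (hpart : U ∪ S ∪ T' = Finset.univ)
    (hUS : Disjoint U S) (hUT : Disjoint U T') (hST : Disjoint S T')
    (hTne : T'.Nonempty)
    (hdir : ∀ s ∈ S, ∀ t ∈ T', r s t)
    (hsize : U.card ≤ S.card) (hk : k ≤ T'.card)
    (hmin : ∀ U' S' T'' : Finset V,
      U' ∪ S' ∪ T'' = Finset.univ →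
      Disjoint U' S' → Disjoint U' T'' → Disjoint S' T'' →
      S'.Nonempty → T''.Nonempty →
      (∀ s ∈ S', ∀ t ∈ T'', r s t) →
      U'.card ≤ S'.card → k ≤ T''.card →
      U.card ≤ U'.card) :
    ∀ X ⊆ U, X.Nonempty →
      X.card ≤ 2 * ((Finset.univ.filter (fun v => ∃ x ∈ X, r x v)) ∩ S).card := by
  intro X hXU _
  by_contra! hcon
  change 2 * (outNbhd r X ∩ S).card < X.card at hcon
  set Y := outNbhd r X ∩ S
  have hYS : Y ⊆ S := inter_subset_right
  have hsep : IsSeparation r ((U \ X) ∪ Y) (S \ Y) (T' ∪ X) :=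
    IsSeparation.move_to_sink ⟨hpart, hUS, hUT, hST, hdir⟩ htour hXU
  have hcardU : ((U \ X) ∪ Y).card = U.card - X.card + Y.card := by
    rw [card_union_of_disjoint (hUS.mono sdiff_subset hYS), card_sdiff_of_subset hXU]
  have hcardS : (S \ Y).card = S.card - Y.card := card_sdiff_of_subset hYS
  have hcardT : (T' ∪ X).card = T'.card + X.card :=
    card_union_of_disjoint (hUT.symm.mono_right hXU)
  have := card_le_card hXU
  have := card_le_card hYS
  have := hmin _ _ _ hsep.cover hsep.disjoint_cut_source hsep.disjoint_cut_sink
    hsep.disjoint_source_sink (card_pos.1 (by omega)) (hTne.mono subset_union_left)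
    hsep.forward (by omega) (by omega)
  omega

/-- Expansion from a minimum cut: if `U` is a minimum-size set disconnecting a
tournament into a source part `S` and sink part `T'` (with `|S| ≥ |U|` and
`|T'| ≥ k`), then every nonempty `X ⊆ U` satisfies `|N⁺(X) ∩ S| ≥ |X|/2`. -/
theorem stmt_15 {V : Type*} [Fintype V] [DecidableEq V]
    (r : V → V → Prop) [DecidableRel r]
    (hirr : ∀ v, ¬ r v v)
    (htour : ∀ u v : V, u ≠ v → (r u v ↔ ¬ r v u))
    (k : ℕ) (U S T' : Finset V)
    (hpart : U ∪ S ∪ T' = Finset.univ)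
    (hUS : Disjoint U S) (hUT : Disjoint U T') (hST : Disjoint S T')
    (hSne : S.Nonempty) (hTne : T'.Nonempty)
    (hdir : ∀ s ∈ S, ∀ t ∈ T', r s t)
    (hsize : U.card ≤ S.card) (hk : k ≤ T'.card)
    (hmin : ∀ U' S' T'' : Finset V,
      U' ∪ S' ∪ T'' = Finset.univ →
      Disjoint U' S' → Disjoint U' T'' → Disjoint S' T'' →
      S'.Nonempty → T''.Nonempty →
      (∀ s ∈ S', ∀ t ∈ T'', r s t) →
      U'.card ≤ S'.card → k ≤ T''.card →
      U.card ≤ U'.card) :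
    ∀ X ⊆ U, X.Nonempty →
      X.card ≤ 2 * ((Finset.univ.filter (fun v => ∃ x ∈ X, r x v)) ∩ S).card :=
  stmt_15_general r htour k U S T' hpart hUS hUT hST hTne hdir hsize hk hmin
end

section
/- Any tournament T on n vertices contains, for every positive integer k with n ≥ 10k, a set B of k vertices and a number m such that either d⁻(v) ≤ d⁺(v) ≤ 4d⁻(v) for all v ∈ B or d⁺(v) ≤ d⁻(v) ≤ 4d⁺(v) for all v ∈ B, and additionally m − 10k ≤ d⁻(v) ≤ m + 10k for all v ∈ B. -/
open Finset

lemma tour_double_count {V : Type*} [Fintype V] [DecidableEq V] (r : V → V → Prop) [DecidableRel r]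
    (htour : ∀ u v : V, u ≠ v → (r u v ↔ ¬ r v u))
    (c : ℕ) (S : Finset V) (hc : ∀ v ∈ S, (Finset.univ.filter (fun u => r u v)).card ≤ c) :
    S.card * S.card ≤ 2 * (S.card * c) + S.card := by
  have e1 : ∑ v ∈ S, (S.filter (fun u => r u v)).card
      = ∑ v ∈ S, ∑ u ∈ S, if r u v then 1 else 0 := by
    refine Finset.sum_congr rfl fun v _ => ?_
    rw [Finset.card_filter]
  have e2 : (∑ v ∈ S, ∑ u ∈ S, if r u v then 1 else 0)
      = ∑ v ∈ S, ∑ u ∈ S, if r v u then 1 else 0 := Finset.sum_comm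
  have e3 : ∀ v ∈ S, ∀ u ∈ S,
      (if u = v then 0 else 1) ≤ (if r u v then 1 else 0) + (if r v u then 1 else 0) := by
    intro v _ u _
    by_cases h : u = v
    · simp [h]
    · have := htour u v h
      by_cases h1 : r u v <;> by_cases h2 : r v u <;> simp_all
  have e4 : ∑ v ∈ S, ∑ u ∈ S, (if u = v then (0:ℕ) else 1) = S.card * S.card - S.card := by
    have : ∀ v ∈ S, ∑ u ∈ S, (if u = v then (0:ℕ) else 1) = S.card - 1 := by
      intro v hv
      have : ∑ u ∈ S, (if u = v then (0:ℕ) else 1)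
          = (S.filter (fun u => ¬ u = v)).card := by
        rw [Finset.card_filter]
        refine Finset.sum_congr rfl fun u _ => ?_
        by_cases h : u = v <;> simp [h]
      rw [this]
      have : S.filter (fun u => ¬ u = v) = S.erase v := by
        ext u; simp [Finset.mem_erase, and_comm]
      rw [this, Finset.card_erase_of_mem hv]
    rw [Finset.sum_congr rfl this, Finset.sum_const, smul_eq_mul,
      Nat.mul_sub_one]
  have e5 : S.card * S.card - S.card ≤ 2 * ∑ v ∈ S, (S.filter (fun u => r u v)).card := by
    rw [e1]
    calc S.card * S.card - S.card
        = ∑ v ∈ S, ∑ u ∈ S, (if u = v then (0:ℕ) else 1) := e4.symm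
      _ ≤ ∑ v ∈ S, ∑ u ∈ S, ((if r u v then 1 else 0) + (if r v u then 1 else 0)) := by
          refine Finset.sum_le_sum fun v hv => Finset.sum_le_sum fun u hu => e3 v hv u hu
      _ = (∑ v ∈ S, ∑ u ∈ S, if r u v then 1 else 0)
          + (∑ v ∈ S, ∑ u ∈ S, if r v u then 1 else 0) := by
          rw [← Finset.sum_add_distrib]
          refine Finset.sum_congr rfl fun v _ => Finset.sum_add_distrib
      _ = 2 * ∑ v ∈ S, ∑ u ∈ S, (if r u v then 1 else 0) := by rw [← e2, two_mul]
  have e6 : ∑ v ∈ S, (S.filter (fun u => r u v)).card ≤ S.card * c := by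
    calc ∑ v ∈ S, (S.filter (fun u => r u v)).card
        ≤ ∑ v ∈ S, c := by
          refine Finset.sum_le_sum fun v hv => ?_
          exact le_trans (Finset.card_le_card
            (Finset.filter_subset_filter _ (Finset.subset_univ S))) (hc v hv)
      _ = S.card * c := by rw [Finset.sum_const, smul_eq_mul]
  omega

/-- Any tournament on `n ≥ 10k` vertices (`k ≥ 1`) contains a
`(4, m, k)`-nearly-regular set of `k` vertices for some number `m`. -/
theorem stmt_16 {V : Type*} [Fintype V] [DecidableEq V]
    (r : V → V → Prop) [DecidableRel r]
    (hirr : ∀ v, ¬ r v v)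
    (htour : ∀ u v : V, u ≠ v → (r u v ↔ ¬ r v u))
    (k : ℕ) (hk : 1 ≤ k) (hn : 10 * k ≤ Fintype.card V) :
    ∃ (B : Finset V) (m : ℝ), B.card = k ∧
      ((∀ v ∈ B, (Finset.univ.filter (fun u => r u v)).card ≤ (Finset.univ.filter (fun u => r v u)).card ∧
          (Finset.univ.filter (fun u => r v u)).card ≤ 4 * (Finset.univ.filter (fun u => r u v)).card) ∨
       (∀ v ∈ B, (Finset.univ.filter (fun u => r v u)).card ≤ (Finset.univ.filter (fun u => r u v)).card ∧
          (Finset.univ.filter (fun u => r u v)).card ≤ 4 * (Finset.univ.filter (fun u => r v u)).card)) ∧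
      (∀ v ∈ B, m - 10 * k ≤ ((Finset.univ.filter (fun u => r u v)).card : ℝ) ∧
        ((Finset.univ.filter (fun u => r u v)).card : ℝ) ≤ m + 10 * k) := by
  classical
  set n := Fintype.card V with hn_def
  set dm : V → ℕ := fun v => (Finset.univ.filter (fun u => r u v)).card with hdm_def
  set dp : V → ℕ := fun v => (Finset.univ.filter (fun u => r v u)).card with hdp_def
  -- degree sum
  have hdeg : ∀ v : V, dp v + dm v + 1 = n := by
    intro v
    have hsplit := Finset.card_filter_add_card_filter_not
      (s := (Finset.univ : Finset V)) (p := fun u => r v u)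
    have hins : Finset.univ.filter (fun u => ¬ r v u)
        = insert v (Finset.univ.filter (fun u => r u v)) := by
      ext u
      simp only [Finset.mem_filter, Finset.mem_insert, Finset.mem_univ, true_and]
      constructor
      · intro h
        by_cases huv : u = v
        · exact Or.inl huv
        · exact Or.inr (by
            have h2 := htour v u (fun h' => huv h'.symm)
            have h3 := htour u v huv
            tauto)
      · rintro (rfl | h)
        · exact hirr u
        · intro h'
          exact (htour v u (fun h'' => (hirr u) (h'' ▸ h))).mp h' h
    have hvnot : v ∉ Finset.univ.filter (fun u => r u v) := by
      simp [hirr v]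
    rw [hins, Finset.card_insert_of_notMem hvnot] at hsplit
    simpa [hdp_def, hdm_def, Nat.add_comm, Nat.add_assoc, Nat.add_left_comm] using hsplit
  -- bad sets are small
  have hn2 : 2 ≤ n := by have := hk; omega
  have hbadgen : ∀ S : Finset V, (∀ v ∈ S, dm v ≤ (n - 2) / 5) →
      5 * S.card ≤ 2 * n + 1 := by
    intro S hc
    have hc' : ∀ v ∈ S, (Finset.univ.filter (fun u => r u v)).card ≤ (n - 2) / 5 := by
      intro v hv
      have := hc v hv
      simpa only [hdm_def] using this
    have hdc := tour_double_count r htour ((n - 2) / 5) S hc'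
    rcases Nat.eq_zero_or_pos S.card with h | h
    · omega
    · have h3 : S.card * S.card ≤ S.card * (2 * ((n - 2) / 5) + 1) :=
        le_trans hdc (le_of_eq (by ring))
      have h4 := Nat.le_of_mul_le_mul_left h3 h
      omega
  have hbad1 : 5 * (Finset.univ.filter (fun v => ¬ (n - 1 ≤ 5 * dm v))).card ≤ 2 * n + 1 := by
    refine hbadgen _ ?_
    intro v hv
    simp only [Finset.mem_filter] at hv
    omega
  have hbad2 : 5 * (Finset.univ.filter (fun v => ¬ (n - 1 ≤ 5 * dp v))).card ≤ 2 * n + 1 := by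
    letI : DecidableRel (fun a b : V => r b a) := fun a b => inferInstanceAs (Decidable (r b a))
    set S := Finset.univ.filter (fun v => ¬ (n - 1 ≤ 5 * dp v)) with hS
    have htour' : ∀ u v : V, u ≠ v → ((fun a b : V => r b a) u v ↔ ¬ (fun a b : V => r b a) v u) := by
      intro u v h
      simpa using htour v u (Ne.symm h)
    have hc' : ∀ v ∈ S, (Finset.univ.filter (fun u => (fun a b : V => r b a) u v)).card ≤ (n - 2) / 5 := by
      intro v hv
      simp only [hS, Finset.mem_filter] at hv
      have h1 : dp v ≤ (n - 2) / 5 := by omega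
      rw [hdp_def] at h1
      simp only at h1
      exact h1
    have hdc := tour_double_count (fun a b : V => r b a) htour' ((n - 2) / 5) S hc'
    rcases Nat.eq_zero_or_pos S.card with h | h
    · omega
    · have h3 : S.card * S.card ≤ S.card * (2 * ((n - 2) / 5) + 1) :=
        le_trans hdc (le_of_eq (by ring))
      have h4 := Nat.le_of_mul_le_mul_left h3 h
      omega
  -- the good set
  set good := Finset.univ.filter (fun v => n - 1 ≤ 5 * dm v ∧ n - 1 ≤ 5 * dp v) with hgood_def
  have hcover : (Finset.univ : Finset V) ⊆
      good ∪ (Finset.univ.filter (fun v => ¬ (n - 1 ≤ 5 * dm v))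
        ∪ Finset.univ.filter (fun v => ¬ (n - 1 ≤ 5 * dp v))) := by
    intro v _
    simp only [hgood_def, Finset.mem_union, Finset.mem_filter, Finset.mem_univ, true_and]
    tauto
  have hgoodcard : n ≤ 5 * good.card + 2 := by
    have h1 := Finset.card_le_card hcover
    have h2 := Finset.card_union_le good
      (Finset.univ.filter (fun v => ¬ (n - 1 ≤ 5 * dm v))
        ∪ Finset.univ.filter (fun v => ¬ (n - 1 ≤ 5 * dp v)))
    have h3 := Finset.card_union_le (Finset.univ.filter (fun v => ¬ (n - 1 ≤ 5 * dm v)))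
      (Finset.univ.filter (fun v => ¬ (n - 1 ≤ 5 * dp v)))
    rw [Finset.card_univ] at h1
    omega
  -- pigeonhole setup
  set a := (n + 3) / 5 with ha_def
  set L := 20 * k + 1 with hL_def
  set b := (4 * (n - 1)) / 5 with hb_def
  set M := (b - a) / L with hM_def
  have hgood_mem : ∀ v ∈ good, n - 1 ≤ 5 * dm v ∧ n - 1 ≤ 5 * dp v := by
    intro v hv
    simpa only [hgood_def, Finset.mem_filter, Finset.mem_univ, true_and] using hv
  have hrange : ∀ v ∈ good, a ≤ dm v ∧ dm v ≤ b := by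
    intro v hv
    obtain ⟨h1, h2⟩ := hgood_mem v hv
    have h3 := hdeg v
    constructor <;> omega
  set f : V → ℕ := fun v => 2 * ((dm v - a) / L) + (if 2 * dm v ≤ n - 1 then 0 else 1)
    with hf_def
  have hmaps : ∀ v ∈ good, f v ∈ Finset.range (2 * M + 2) := by
    intro v hv
    obtain ⟨h1, h2⟩ := hrange v hv
    have h3 : (dm v - a) / L ≤ M := Nat.div_le_div_right (by omega)
    simp only [hf_def, Finset.mem_range]
    by_cases h : 2 * dm v ≤ n - 1 <;> simp [h] <;> omega
  have hML : M * L ≤ b - a := Nat.div_mul_le_self _ _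
  have hba : 5 * (b - a) ≤ 3 * n + 1 := by omega
  have hcount : (Finset.range (2 * M + 2)).card * (k - 1) < good.card := by
    rw [Finset.card_range]
    rcases Nat.eq_zero_or_pos M with hM0 | hM1
    · rw [hM0]; omega
    · have h1 : 100 * k * M + 5 * M ≤ 3 * n + 1 := by
        have : 5 * (M * L) ≤ 3 * n + 1 := le_trans (by omega) hba
        calc 100 * k * M + 5 * M = 5 * (M * L) := by rw [hL_def]; ring
          _ ≤ 3 * n + 1 := this
      obtain ⟨j, rfl⟩ : ∃ j, k = j + 1 := ⟨k - 1, by omega⟩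
      have hgoal : (2 * M + 2) * j + 1 ≤ good.card := by
        nlinarith [hgoodcard, hn, hM1, h1]
      simpa using hgoal
  obtain ⟨y, hy, hylt⟩ := Finset.exists_lt_card_fiber_of_mul_lt_card_of_maps_to hmaps hcount
  obtain ⟨B, hBsub, hBcard⟩ := Finset.exists_subset_card_eq
    (show k ≤ (good.filter (fun v => f v = y)).card by omega)
  have hBmem : ∀ v ∈ B, v ∈ good ∧ f v = y := by
    intro v hv
    have := hBsub hv
    simpa only [Finset.mem_filter] using this
  set q := y / 2 with hq_def
  have hqv : ∀ v ∈ B, (dm v - a) / L = q ∧ ((2 * dm v ≤ n - 1) ↔ y % 2 = 0) := by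
    intro v hv
    obtain ⟨hvg, hfv⟩ := hBmem v hv
    simp only [hf_def] at hfv
    by_cases hb2 : 2 * dm v ≤ n - 1
    · simp only [hb2, if_pos] at hfv
      constructor
      · omega
      · simp [hb2]; omega
    · simp only [hb2, if_neg, not_false_iff] at hfv
      constructor
      · omega
      · simp [hb2]; omega
  have hwin : ∀ v ∈ B, a + q * L ≤ dm v ∧ dm v ≤ a + q * L + 20 * k := by
    intro v hv
    obtain ⟨hvg, _⟩ := hBmem v hv
    obtain ⟨hq1, _⟩ := hqv v hv
    obtain ⟨hra, hrb⟩ := hrange v hvg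
    have hLpos : 0 < L := by omega
    have h1 : q * L ≤ dm v - a := by
      rw [← hq1]; exact Nat.div_mul_le_self _ _
    have h2 : dm v - a < q * L + L := by
      have h2' : (dm v - a) / L < q + 1 := by omega
      have h2'' := (Nat.div_lt_iff_lt_mul hLpos).mp h2'
      calc dm v - a < (q + 1) * L := h2''
        _ = q * L + L := by ring
    omega
  refine ⟨B, ((a + q * L + 10 * k : ℕ) : ℝ), hBcard, ?_, ?_⟩
  · by_cases hpar : y % 2 = 0
    · refine Or.inl ?_
      intro v hv
      obtain ⟨hvg, _⟩ := hBmem v hv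
      obtain ⟨hg1, hg2⟩ := hgood_mem v hvg
      obtain ⟨_, hq2⟩ := hqv v hv
      have hb2 : 2 * dm v ≤ n - 1 := hq2.mpr hpar
      have hd := hdeg v
      have e1 : (Finset.univ.filter (fun u => r u v)).card = dm v := rfl
      have e2 : (Finset.univ.filter (fun u => r v u)).card = dp v := rfl
      rw [e1, e2]
      constructor <;> omega
    · refine Or.inr ?_
      intro v hv
      obtain ⟨hvg, _⟩ := hBmem v hv
      obtain ⟨hg1, hg2⟩ := hgood_mem v hvg
      obtain ⟨_, hq2⟩ := hqv v hv
      have hb2 : ¬ (2 * dm v ≤ n - 1) := fun h => hpar (hq2.mp h)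
      have hd := hdeg v
      have e1 : (Finset.univ.filter (fun u => r u v)).card = dm v := rfl
      have e2 : (Finset.univ.filter (fun u => r v u)).card = dp v := rfl
      rw [e1, e2]
      constructor <;> omega
  · intro v hv
    have e1 : (Finset.univ.filter (fun u => r u v)).card = dm v := rfl
    rw [e1]
    obtain ⟨hw1, hw2⟩ := hwin v hv
    have hc1 : ((a + q * L : ℕ) : ℝ) ≤ (dm v : ℝ) := by exact_mod_cast hw1
    have hc2 : ((dm v : ℕ) : ℝ) ≤ ((a + q * L + 20 * k : ℕ) : ℝ) := by exact_mod_cast hw2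
    push_cast at hc1 hc2 ⊢
    constructor <;> linarith
end
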